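/- arXiv:2001.04220 — 3 statements merged into one kernel-verified Lean document; each statement's English description precedes it below -/
import Mathlib

section
/- For every natural number n, ∫₀^∞ |log ρ|^n e^{−ρ²} ρ dρ ≤ √2 · n!. -/
open Real Set MeasureTheory
open scoped Nat

/-!
Since `|t| ^ n ≤ n! e^{|t|} ≤ n! (e^t + e^{-t})`, taking `t = log ρ` gives
`|log ρ| ^ n ρ ≤ n! (1 + ρ²)`, so the integral is at most `n!` times the Gaussian moment
`∫₀^∞ (1 + ρ²) e^{-ρ²} dρ = Γ(1/2)/2 + Γ(3/2)/2 = 3√π/4`,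
and `3√π/4 ≤ √2` as `π ≤ 32/9`.
-/

theorem Real.abs_log_pow_le_factorial_mul {x : ℝ} (hx : 0 < x) (n : ℕ) :
    |log x| ^ n ≤ n ! * (x + x⁻¹) :=
  calc |log x| ^ n ≤ n ! * exp |log x| := by
        rw [← div_le_iff₀' (by positivity)]
        exact pow_div_factorial_le_exp _ (abs_nonneg _) n
    _ ≤ n ! * (x + x⁻¹) := by
        gcongr
        simpa [exp_neg, exp_log hx] using exp_abs_le (log x)

theorem integrableOn_Ioi_pow_mul_exp_neg_sq (k : ℕ) :
    IntegrableOn (fun x : ℝ ↦ x ^ k * exp (-x ^ 2)) (Ioi 0) := by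
  simpa using integrableOn_rpow_mul_exp_neg_mul_sq one_pos (s := k)
    (by linarith [k.cast_nonneg (α := ℝ)])

theorem integral_Ioi_pow_mul_exp_neg_sq (k : ℕ) :
    ∫ x in Ioi (0 : ℝ), x ^ k * exp (-x ^ 2) = Gamma ((k + 1) / 2) / 2 := by
  have := integral_rpow_mul_exp_neg_rpow two_pos (q := k) (by linarith [k.cast_nonneg (α := ℝ)])
  norm_cast at this
  rw [this]; push_cast; ring

theorem integrableOn_Ioi_one_add_sq_mul_exp_neg_sq :
    IntegrableOn (fun x : ℝ ↦ (1 + x ^ 2) * exp (-x ^ 2)) (Ioi 0) := by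
  refine ((integrableOn_Ioi_pow_mul_exp_neg_sq 0).add
    (integrableOn_Ioi_pow_mul_exp_neg_sq 2)).congr_fun (fun x _ ↦ ?_) measurableSet_Ioi
  simp only [Pi.add_apply]
  ring

theorem integral_Ioi_one_add_sq_mul_exp_neg_sq :
    ∫ x in Ioi (0 : ℝ), (1 + x ^ 2) * exp (-x ^ 2) = 3 * √π / 4 := by
  have h0 := integral_Ioi_pow_mul_exp_neg_sq 0
  have h2 := integral_Ioi_pow_mul_exp_neg_sq 2
  have i0 := integrableOn_Ioi_pow_mul_exp_neg_sq 0
  simp only [pow_zero, one_mul] at h0 i0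
  simp_rw [add_mul, one_mul]
  rw [integral_add i0 (integrableOn_Ioi_pow_mul_exp_neg_sq 2), h0, h2]
  have h32 : Gamma (3 / 2) = √π / 2 := by
    rw [show (3 / 2 : ℝ) = 1 / 2 + 1 by norm_num, Gamma_add_one (by norm_num), Gamma_one_half_eq]
    ring
  norm_num [Gamma_one_half_eq, h32]
  ring

/-- For every natural number `n`,
`∫₀^∞ |log ρ|^n e^{−ρ²} ρ dρ ≤ √2 · n!`. -/
theorem integral_abs_log_pow_weight_one (n : ℕ) :
    ∫ ρ in Set.Ioi (0 : ℝ), |Real.log ρ| ^ n * Real.exp (-ρ ^ 2) * ρ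
      ≤ Real.sqrt 2 * n.factorial := by
  have hbound : ∀ ρ ∈ Ioi (0 : ℝ),
      |log ρ| ^ n * exp (-ρ ^ 2) * ρ ≤ n ! * ((1 + ρ ^ 2) * exp (-ρ ^ 2)) :=
    fun ρ (hρ : 0 < ρ) ↦
    calc |log ρ| ^ n * exp (-ρ ^ 2) * ρ ≤ n ! * (ρ + ρ⁻¹) * exp (-ρ ^ 2) * ρ := by
          gcongr; exact abs_log_pow_le_factorial_mul hρ n
      _ = n ! * ((1 + ρ ^ 2) * exp (-ρ ^ 2)) := by field_simp [hρ.ne']; ring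
  have hconst : 3 * √π / 4 ≤ √2 := by
    rw [show 3 * √π / 4 = √(9 * π / 16) by
      rw [sqrt_div' _ (by norm_num), sqrt_mul' _ pi_pos.le]; norm_num]
    gcongr
    linarith [pi_lt_d2]
  calc ∫ ρ in Ioi (0 : ℝ), |log ρ| ^ n * exp (-ρ ^ 2) * ρ
      ≤ ∫ ρ in Ioi (0 : ℝ), n ! * ((1 + ρ ^ 2) * exp (-ρ ^ 2)) := by
        refine integral_mono_of_nonneg ?_ (Integrable.const_mul ?_ _) ?_
        · filter_upwards [ae_restrict_mem measurableSet_Ioi] with ρ hρ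
          exact mul_nonneg (by positivity) (le_of_lt hρ)
        · exact integrableOn_Ioi_one_add_sq_mul_exp_neg_sq
        · exact (ae_restrict_iff' measurableSet_Ioi).2 (ae_of_all _ hbound)
    _ = n ! * (3 * √π / 4) := by rw [integral_const_mul, integral_Ioi_one_add_sq_mul_exp_neg_sq]
    _ ≤ √2 * n ! := by rw [mul_comm]; gcongr
end

section
/- For every natural number n, ∫₀^∞ |log r|^n e^{−r²} r³ dr ≤ ((4√6 + 9√2)⁄12) · n!. -/
/-!
Since `|t| ^ n ≤ n! e^{|t|}`, taking `t = log (r ^ 2)` gives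
`|log r| ^ n ≤ |log (r ^ 2)| ^ n ≤ n! (r ^ 2 + r⁻²)`. Hence the integral is at most
`n! ∫₀^∞ (r ^ 5 + r) e^{-r²} dr = n! (Γ(3) + Γ(1)) / 2 = (3/2) n!`, and `3/2` is below the
stated constant.
-/

open Real Set MeasureTheory

lemma exp_abs_log_le_add_inv {x : ℝ} (hx : 0 < x) : exp |log x| ≤ x + x⁻¹ := by
  rcases abs_cases (log x) with ⟨h, _⟩ | ⟨h, _⟩ <;> rw [h]
  · rw [exp_log hx]
    linarith [inv_pos.2 hx]
  · rw [exp_neg, exp_log hx]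
    linarith

lemma abs_log_pow_le_factorial_mul_add_inv {x : ℝ} (hx : 0 < x) (n : ℕ) :
    |log x| ^ n ≤ n.factorial * (x + x⁻¹) := by
  have hpow := pow_div_factorial_le_exp _ (abs_nonneg (log x)) n
  rw [div_le_iff₀ (by positivity), mul_comm] at hpow
  exact hpow.trans (by gcongr; exact exp_abs_log_le_add_inv hx)

lemma abs_log_pow_le_factorial_mul_sq_add_inv_sq {r : ℝ} (hr : 0 < r) (n : ℕ) :
    |log r| ^ n ≤ n.factorial * (r ^ 2 + (r ^ 2)⁻¹) := by
  have hlog : |log (r ^ 2)| = 2 * |log r| := by simp [log_pow, abs_mul]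
  calc |log r| ^ n ≤ |log (r ^ 2)| ^ n :=
        pow_le_pow_left₀ (abs_nonneg _) (by rw [hlog]; linarith [abs_nonneg (log r)]) n
    _ ≤ n.factorial * (r ^ 2 + (r ^ 2)⁻¹) :=
        abs_log_pow_le_factorial_mul_add_inv (by positivity) n

lemma integrableOn_pow_mul_exp_neg_sq (k : ℕ) :
    IntegrableOn (fun r : ℝ => r ^ k * exp (-r ^ 2)) (Ioi 0) := by
  refine (integrableOn_rpow_mul_exp_neg_rpow (s := k) (by linarith [k.cast_nonneg (α := ℝ)])
    two_pos).congr_fun (fun r _ => ?_) measurableSet_Ioi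
  simp only [rpow_natCast, rpow_two]

lemma integral_pow_two_mul_add_one_mul_exp_neg_sq (k : ℕ) :
    ∫ r in Ioi (0 : ℝ), r ^ (2 * k + 1) * exp (-r ^ 2) = k.factorial / 2 := by
  have h := integral_rpow_mul_exp_neg_rpow (p := 2) (q := (2 * k + 1 : ℕ)) two_pos
    (by linarith [(2 * k + 1).cast_nonneg (α := ℝ)])
  have hGamma : ((((2 * k + 1 : ℕ) : ℝ) + 1) / 2) = k + 1 := by push_cast; ring
  simp only [rpow_natCast, rpow_two, hGamma, Gamma_nat_eq_factorial] at h
  rw [h]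
  ring

lemma abs_log_pow_mul_exp_neg_sq_mul_pow_three_le {r : ℝ} (hr : 0 < r) (n : ℕ) :
    |log r| ^ n * exp (-r ^ 2) * r ^ 3
      ≤ n.factorial * (r ^ (2 * 2 + 1) * exp (-r ^ 2) + r ^ (2 * 0 + 1) * exp (-r ^ 2)) :=
  calc |log r| ^ n * exp (-r ^ 2) * r ^ 3
      ≤ n.factorial * (r ^ 2 + (r ^ 2)⁻¹) * exp (-r ^ 2) * r ^ 3 := by
        gcongr
        exact abs_log_pow_le_factorial_mul_sq_add_inv_sq hr n
    _ = _ := by field_simp; ring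

/-- For every natural number `n`,
`∫₀^∞ |log r|^n e^{−r²} r³ dr ≤ ((4√6 + 9√2)/12) · n!`. -/
theorem integral_abs_log_pow_weight_cube (n : ℕ) :
    ∫ r in Set.Ioi (0 : ℝ), |Real.log r| ^ n * Real.exp (-r ^ 2) * r ^ 3
      ≤ (4 * Real.sqrt 6 + 9 * Real.sqrt 2) / 12 * n.factorial := by
  have hconst : (3 / 2 : ℝ) ≤ (4 * sqrt 6 + 9 * sqrt 2) / 12 := by
    have h6 : (2 : ℝ) ≤ sqrt 6 := le_sqrt_of_sq_le (by norm_num)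
    have h2 : (7 / 5 : ℝ) ≤ sqrt 2 := le_sqrt_of_sq_le (by norm_num)
    linarith
  calc ∫ r in Ioi (0 : ℝ), |log r| ^ n * exp (-r ^ 2) * r ^ 3
      ≤ ∫ r in Ioi (0 : ℝ), n.factorial *
          (r ^ (2 * 2 + 1) * exp (-r ^ 2) + r ^ (2 * 0 + 1) * exp (-r ^ 2)) :=
        setIntegral_mono_of_nonneg (fun r (hr : 0 < r) => by positivity)
          (fun r hr => abs_log_pow_mul_exp_neg_sq_mul_pow_three_le hr n)
          (((integrableOn_pow_mul_exp_neg_sq _).add (integrableOn_pow_mul_exp_neg_sq _)).const_mul _)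
    _ = 3 / 2 * n.factorial := by
        rw [integral_const_mul, integral_add (integrableOn_pow_mul_exp_neg_sq _)
          (integrableOn_pow_mul_exp_neg_sq _), integral_pow_two_mul_add_one_mul_exp_neg_sq,
          integral_pow_two_mul_add_one_mul_exp_neg_sq]
        norm_num [Nat.factorial]
        ring
    _ ≤ _ := by gcongr
end

section
/- Let (Ω, P) be a probability space and Y : Ω → ℝ a random variable such that E[|Y|^m] ≤ c (m+1)! M^m for all natural numbers m, where c > 0 and M > 0 are constants. Then for t = 1/(2M) one has E[e^{t|Y|}] ≤ 4c, and consequently P{|Y| ≥ a} ≤ 4c · e^{−a/(2M)} for every a > 0. -/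
/-!
Expanding `exp (t |Y|)` as a power series and integrating term by term, the moment bound turns
`E[exp (t |Y|)]` into at most `c ∑ (m + 1) (t M)^m = c / (1 - t M)^2`, which is `4 c` at
`t = 1 / (2 M)`. The tail bound is then Markov's inequality applied to `exp (t |Y|)`.
-/

open MeasureTheory Real

lemma ENNReal.tsum_ofReal_succ_mul_geometric {r : ℝ} (hr₀ : 0 ≤ r) (hr₁ : r < 1) :
    ∑' n : ℕ, ENNReal.ofReal ((n + 1) * r ^ n) = ENNReal.ofReal (1 / (1 - r) ^ 2) := by
  have h : HasSum (fun n : ℕ ↦ (n + 1 : ℝ) * r ^ n) (1 / (1 - r) ^ 2) := by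
    simpa using hasSum_choose_mul_geometric_of_norm_lt_one 1 (r := r) (by rwa [norm_of_nonneg hr₀])
  rw [← ENNReal.ofReal_tsum_of_nonneg (fun n ↦ by positivity) h.summable, h.tsum_eq]

lemma ENNReal.ofReal_exp_eq_tsum {x : ℝ} (hx : 0 ≤ x) :
    ENNReal.ofReal (exp x) = ∑' n : ℕ, ENNReal.ofReal (x ^ n / n.factorial) := by
  rw [← ENNReal.ofReal_tsum_of_nonneg (fun n ↦ by positivity) (summable_pow_div_factorial x),
    exp_eq_exp_ℝ, NormedSpace.exp_eq_tsum_div]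

section

variable {Ω : Type*} [MeasurableSpace Ω] {μ : Measure Ω}

lemma lintegral_exp_mul_abs_eq_tsum {Y : Ω → ℝ} (hY : AEMeasurable Y μ) {t : ℝ} (ht : 0 ≤ t) :
    ∫⁻ ω, ENNReal.ofReal (exp (t * |Y ω|)) ∂μ
      = ∑' n : ℕ, ENNReal.ofReal (t ^ n / n.factorial) * ∫⁻ ω, ENNReal.ofReal (|Y ω| ^ n) ∂μ := by
  have hmom (n : ℕ) : AEMeasurable (fun ω ↦ ENNReal.ofReal (|Y ω| ^ n)) μ := by fun_prop
  have hterm (n : ℕ) (y : ℝ) : ENNReal.ofReal ((t * |y|) ^ n / n.factorial)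
      = ENNReal.ofReal (t ^ n / n.factorial) * ENNReal.ofReal (|y| ^ n) := by
    rw [← ENNReal.ofReal_mul (by positivity), mul_pow, div_mul_eq_mul_div, mul_div_right_comm]
  simp_rw [ENNReal.ofReal_exp_eq_tsum (mul_nonneg ht (abs_nonneg _)), hterm]
  rw [lintegral_tsum fun n ↦ (hmom n).const_mul _]
  simp_rw [lintegral_const_mul'' _ (hmom _)]

lemma lintegral_exp_mul_abs_le_of_moment_le {Y : Ω → ℝ} (hY : AEMeasurable Y μ) {c M t : ℝ}
    (hM : 0 ≤ M) (ht : 0 ≤ t) (htM : t * M < 1)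
    (hmom : ∀ n : ℕ, ∫⁻ ω, ENNReal.ofReal (|Y ω| ^ n) ∂μ
        ≤ ENNReal.ofReal (c * (n + 1).factorial * M ^ n)) :
    ∫⁻ ω, ENNReal.ofReal (exp (t * |Y ω|)) ∂μ ≤ ENNReal.ofReal (c / (1 - t * M) ^ 2) := by
  have hterm (n : ℕ) : ENNReal.ofReal (t ^ n / n.factorial)
      * ENNReal.ofReal (c * (n + 1).factorial * M ^ n)
      = ENNReal.ofReal c * ENNReal.ofReal ((n + 1) * (t * M) ^ n) := by
    rw [mul_assoc c, ENNReal.ofReal_mul' (by positivity), mul_left_comm,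
      ← ENNReal.ofReal_mul (by positivity), Nat.factorial_succ, Nat.cast_mul, mul_pow]
    congr 2
    field_simp
    push_cast
    ring
  calc ∫⁻ ω, ENNReal.ofReal (exp (t * |Y ω|)) ∂μ
      ≤ ∑' n : ℕ, ENNReal.ofReal (t ^ n / n.factorial)
          * ENNReal.ofReal (c * (n + 1).factorial * M ^ n) := by
        rw [lintegral_exp_mul_abs_eq_tsum hY ht]
        gcongr with n
        exact hmom n
    _ = ENNReal.ofReal (c / (1 - t * M) ^ 2) := by
        rw [tsum_congr hterm, ENNReal.tsum_mul_left,
          ENNReal.tsum_ofReal_succ_mul_geometric (by positivity) htM,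
          ← ENNReal.ofReal_mul' (by positivity), mul_one_div]

lemma measure_ge_le_exp_neg_mul_lintegral_exp {X : Ω → ℝ} (hX : AEMeasurable X μ) {t : ℝ}
    (ht : 0 ≤ t) (a : ℝ) :
    μ {ω | a ≤ X ω}
      ≤ ENNReal.ofReal (exp (-(t * a))) * ∫⁻ ω, ENNReal.ofReal (exp (t * X ω)) ∂μ := by
  set ε := ENNReal.ofReal (exp (t * a))
  calc μ {ω | a ≤ X ω}
      ≤ μ {ω | ε ≤ ENNReal.ofReal (exp (t * X ω))} := by
        refine measure_mono fun ω (hω : a ≤ X ω) ↦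
          ENNReal.ofReal_le_ofReal (exp_le_exp.2 (mul_le_mul_of_nonneg_left hω ht))
    _ = ENNReal.ofReal (exp (-(t * a))) * (ε * μ {ω | ε ≤ ENNReal.ofReal (exp (t * X ω))}) := by
        rw [← mul_assoc, ← ENNReal.ofReal_mul (exp_pos _).le, ← exp_add, neg_add_cancel, exp_zero,
          ENNReal.ofReal_one, one_mul]
    _ ≤ ENNReal.ofReal (exp (-(t * a))) * ∫⁻ ω, ENNReal.ofReal (exp (t * X ω)) ∂μ := by
        gcongr
        exact mul_meas_ge_le_lintegral₀ (by fun_prop) ε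

end

theorem large_deviation_from_moments_general {Ω : Type*} [MeasurableSpace Ω]
    (P : Measure Ω)
    (Y : Ω → ℝ) (hY : Measurable Y) (c M : ℝ) (hM : 0 < M)
    (hmom : ∀ m : ℕ,
      ∫⁻ ω, ENNReal.ofReal (|Y ω| ^ m) ∂P
        ≤ ENNReal.ofReal (c * (m + 1).factorial * M ^ m)) :
    (∫⁻ ω, ENNReal.ofReal (Real.exp (|Y ω| / (2 * M))) ∂P ≤ ENNReal.ofReal (4 * c)) ∧
      ∀ a : ℝ, 0 < a →
        P {ω | a ≤ |Y ω|} ≤ ENNReal.ofReal (4 * c * Real.exp (-a / (2 * M))) := by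
  have hscale : (2 * M)⁻¹ * M = 1 / 2 := by field_simp
  have hmgf := lintegral_exp_mul_abs_le_of_moment_le hY.aemeasurable hM.le
    (t := (2 * M)⁻¹) (by positivity) (by rw [hscale]; norm_num) hmom
  rw [hscale, show c / (1 - 1 / 2) ^ 2 = 4 * c by ring] at hmgf
  simp_rw [div_eq_inv_mul, mul_neg]
  refine ⟨hmgf, fun a _ ↦ ?_⟩
  calc P {ω | a ≤ |Y ω|}
      ≤ ENNReal.ofReal (exp (-((2 * M)⁻¹ * a)))
          * ∫⁻ ω, ENNReal.ofReal (exp ((2 * M)⁻¹ * |Y ω|)) ∂P :=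
        measure_ge_le_exp_neg_mul_lintegral_exp hY.abs.aemeasurable (by positivity) a
    _ ≤ ENNReal.ofReal (exp (-((2 * M)⁻¹ * a))) * ENNReal.ofReal (4 * c) := by gcongr
    _ = ENNReal.ofReal (4 * c * exp (-((2 * M)⁻¹ * a))) := by
        rw [mul_comm, ENNReal.ofReal_mul' (exp_pos _).le]

/-- Large-deviation estimate: if a random variable `Y` on a probability space satisfies
`E[|Y|^m] ≤ c (m+1)! M^m` for all `m`, then with `t = 1/(2M)` one has
`E[e^{t|Y|}] ≤ 4c`, and consequently `P{|Y| ≥ a} ≤ 4c e^{−a/(2M)}` for every `a > 0`. -/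
theorem large_deviation_from_moments {Ω : Type*} [MeasurableSpace Ω]
    (P : Measure Ω) [IsProbabilityMeasure P]
    (Y : Ω → ℝ) (hY : Measurable Y) (c M : ℝ) (hc : 0 < c) (hM : 0 < M)
    (hmom : ∀ m : ℕ,
      ∫⁻ ω, ENNReal.ofReal (|Y ω| ^ m) ∂P
        ≤ ENNReal.ofReal (c * (m + 1).factorial * M ^ m)) :
    (∫⁻ ω, ENNReal.ofReal (Real.exp (|Y ω| / (2 * M))) ∂P ≤ ENNReal.ofReal (4 * c)) ∧
      ∀ a : ℝ, 0 < a →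
        P {ω | a ≤ |Y ω|} ≤ ENNReal.ofReal (4 * c * Real.exp (-a / (2 * M))) :=
  large_deviation_from_moments_general P Y hY c M hM hmom
end
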